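/- A finite binary tree t is uniquely determined by the set Dyad(t): if Dyad(t) = Dyad(t') then t = t'. -/

import Mathlib

/-- Finite binary trees. -/
inductive PTree
  | leaf : PTree
  | node : PTree → PTree → PTree
deriving DecidableEq

/-- The finite set of dyadic rationals attached to a tree: `Dyad(•) = {0,1}` and
`Dyad(t₁t₂)` is `Dyad(t₁)` contracted to `[0,1/2]` union `Dyad(t₂)` contracted to
`[1/2,1]`. -/
def PTree.dyad : PTree → Finset ℚ
  | .leaf => {0, 1}
  | .node t₁ t₂ =>
      (t₁.dyad.image (fun x => x / 2)) ∪ (t₂.dyad.image (fun x => 1 / 2 + x / 2))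

/-!
`Dyad(t₁t₂) ∩ [0, 1/2]` is exactly the contracted copy of `Dyad(t₁)`: the right half only
touches `[0, 1/2]` at its contracted `0`, which is also the contracted `1 ∈ Dyad(t₁)`.
Symmetrically for `[1/2, 1]`, so `Dyad` of a node determines `Dyad` of both children,
and `1/2` tells nodes from the leaf. Induction on the tree concludes.
-/

namespace PTree

lemma mem_Icc_of_mem_dyad {t : PTree} {x : ℚ} (hx : x ∈ t.dyad) : x ∈ Set.Icc 0 1 := by
  induction t generalizing x with
  | leaf =>
    simp only [dyad, Finset.mem_insert, Finset.mem_singleton] at hx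
    rcases hx with rfl | rfl <;> norm_num
  | node a b iha ihb =>
    simp only [dyad, Finset.mem_union, Finset.mem_image] at hx
    rcases hx with ⟨y, hy, rfl⟩ | ⟨y, hy, rfl⟩
    · obtain ⟨h0, h1⟩ := iha hy; constructor <;> linarith
    · obtain ⟨h0, h1⟩ := ihb hy; constructor <;> linarith

lemma zero_mem_dyad (t : PTree) : (0 : ℚ) ∈ t.dyad := by
  induction t with
  | leaf => simp [dyad]
  | node a b iha _ => exact Finset.mem_union_left _ (Finset.mem_image.2 ⟨0, iha, by norm_num⟩)

lemma one_mem_dyad (t : PTree) : (1 : ℚ) ∈ t.dyad := by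
  induction t with
  | leaf => simp [dyad]
  | node a b _ ihb => exact Finset.mem_union_right _ (Finset.mem_image.2 ⟨1, ihb, by norm_num⟩)

lemma dyad_leaf_ne_dyad_node (a b : PTree) : leaf.dyad ≠ (node a b).dyad := by
  have half_mem : (1 / 2 : ℚ) ∈ (node a b).dyad :=
    Finset.mem_union_left _ (Finset.mem_image.2 ⟨1, one_mem_dyad a, by norm_num⟩)
  intro h
  rw [← h] at half_mem
  norm_num [dyad] at half_mem

lemma filter_dyad_node_le_half (a b : PTree) :
    (node a b).dyad.filter (· ≤ 1 / 2) = a.dyad.image (· / 2) := by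
  ext x
  simp only [dyad, Finset.mem_filter, Finset.mem_union, Finset.mem_image]
  constructor
  · rintro ⟨h | ⟨y, hy, rfl⟩, hle⟩
    · exact h
    · have hy0 : y = 0 := le_antisymm (by linarith) (mem_Icc_of_mem_dyad hy).1
      exact ⟨1, one_mem_dyad a, by rw [hy0]; norm_num⟩
  · rintro ⟨y, hy, rfl⟩
    exact ⟨Or.inl ⟨y, hy, rfl⟩, by linarith [(mem_Icc_of_mem_dyad hy).2]⟩

lemma filter_dyad_node_half_le (a b : PTree) :
    (node a b).dyad.filter (1 / 2 ≤ ·) = b.dyad.image (1 / 2 + · / 2) := by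
  ext x
  simp only [dyad, Finset.mem_filter, Finset.mem_union, Finset.mem_image]
  constructor
  · rintro ⟨⟨y, hy, rfl⟩ | h, hle⟩
    · have hy1 : y = 1 := le_antisymm (mem_Icc_of_mem_dyad hy).2 (by linarith)
      exact ⟨0, zero_mem_dyad b, by rw [hy1]; norm_num⟩
    · exact h
  · rintro ⟨y, hy, rfl⟩
    exact ⟨Or.inr ⟨y, hy, rfl⟩, by linarith [(mem_Icc_of_mem_dyad hy).1]⟩

lemma dyad_eq_of_dyad_node_eq {a b a' b' : PTree} (h : (node a b).dyad = (node a' b').dyad) :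
    a.dyad = a'.dyad ∧ b.dyad = b'.dyad := by
  have halve_inj : Function.Injective (· / 2 : ℚ → ℚ) := fun x y hxy => by simpa using hxy
  constructor
  · refine Finset.image_injective halve_inj ?_
    rw [← filter_dyad_node_le_half a b, ← filter_dyad_node_le_half a' b', h]
  · refine Finset.image_injective (f := (1 / 2 + · / 2))
      ((add_right_injective _).comp halve_inj) ?_
    rw [← filter_dyad_node_half_le a b, ← filter_dyad_node_half_le a' b', h]

end PTree

/-- A finite binary tree is uniquely determined by the set `Dyad(t)`. -/
theorem ptree_dyad_injective (t t' : PTree) (h : t.dyad = t'.dyad) : t = t' := by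
  induction t generalizing t' with
  | leaf =>
    cases t' with
    | leaf => rfl
    | node a' b' => exact absurd h (PTree.dyad_leaf_ne_dyad_node a' b')
  | node a b iha ihb =>
    cases t' with
    | leaf => exact absurd h.symm (PTree.dyad_leaf_ne_dyad_node a b)
    | node a' b' =>
      obtain ⟨ha, hb⟩ := PTree.dyad_eq_of_dyad_node_eq h
      rw [iha a' ha, ihb b' hb]
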